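/- Let F be a finite field with q elements and let k, s, t, ω be integers with 1 ≤ k ≤ s ≤ t and 0 ≤ ω ≤ s. For every function g : F^{t−k} × F^{s−k} → (subsets of F) × (subsets of F), the number of pairs (A, B) of feature sets with |A| = t, |B| = s, |A ∩ B| = ω such that g(rec_k(A), rec_k(B)) = (A, B) is at most q^{min(t+s−2k, 2t+s−2ω−k)}. Equivalently, for a uniformly random such pair (A, B), the probability that g recovers (A, B) from the two deterministic vault records is at most q^{min(t+s−2k, 2t+s−2ω−k)} divided by the total number of such pairs. (This is Corollary 3, the bound on full recovery attacks via record multiplicity, in the case of uniformly distributed feature sets.) -/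

import Mathlib

open Polynomial Finset

/-! Recovered pairs inject into their records `(rec A, rec B)`, since `g` inverts this map on
them; there are `q ^ ((t - k) + (s - k))` records. Moreover
`χ_A χ_{B∖A} = χ_B χ_{A∖B}` with `χ_{A∖B}` monic of degree `t - ω ≥ s - ω = |B ∖ A|`, so the
coefficients of `χ_B` in degrees `≥ k` are determined by those of `χ_A` and by `A ∖ B`, `B ∖ A`.
Hence the recovered pairs also inject into triples `(rec A, A ∖ B, B ∖ A)`, of which there are
at most `q ^ ((t - k) + (t - ω) + (s - ω))`. -/

noncomputable def charPoly {F : Type*} [Field F] (A : Finset F) : F[X] :=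
  ∏ a ∈ A, (X - C a)

/-- The deterministic vault record of a feature set `A` of size `n` with
parameter `k`: the tuple of coefficients of `X^k, …, X^{n−1}` of `χ_A`. -/
noncomputable def vRec {F : Type*} [Field F] (n k : ℕ) (A : Finset F) :
    Fin (n - k) → F :=
  fun j => (charPoly A).coeff (k + (j : ℕ))

theorem Polynomial.degree_sub_le_of_mul_eq_mul {R : Type*} [Ring R] [Nontrivial R]
    {P P' Q Q' D E : R[X]} (hD : D.Monic) (hED : E.degree ≤ D.degree)
    (h : P * E = Q * D) (h' : P' * E = Q' * D) : (Q - Q').degree ≤ (P - P').degree := by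
  have hdeg : (Q - Q').degree + D.degree ≤ (P - P').degree + D.degree :=
    calc (Q - Q').degree + D.degree = ((P - P') * E).degree := by
          rw [← hD.degree_mul, sub_mul, sub_mul, h, h']
      _ ≤ (P - P').degree + E.degree := degree_mul_le _ _
      _ ≤ (P - P').degree + D.degree := add_le_add_right hED _
  exact (WithBot.add_le_add_iff_right (by simpa using hD.ne_zero)).mp hdeg

section CharPoly

variable {F : Type*} [Field F]

theorem charPoly_monic (A : Finset F) : (charPoly A).Monic :=
  monic_prod_of_monic _ _ fun a _ => monic_X_sub_C a

theorem charPoly_natDegree (A : Finset F) : (charPoly A).natDegree = A.card := by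
  rw [charPoly, natDegree_prod _ _ fun a _ => X_sub_C_ne_zero a]
  simp

theorem charPoly_mul_charPoly_sdiff [DecidableEq F] (A B : Finset F) :
    charPoly A * charPoly (B \ A) = charPoly B * charPoly (A \ B) := by
  simp only [charPoly]
  rw [← prod_union disjoint_sdiff, ← prod_union disjoint_sdiff, union_sdiff_self_eq_union,
    union_sdiff_self_eq_union, union_comm]

theorem coeff_charPoly_eq_of_card_le {A A' : Finset F} {n m : ℕ} (hA : A.card = n)
    (hA' : A'.card = n) (hm : n ≤ m) : (charPoly A).coeff m = (charPoly A').coeff m := by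
  rcases hm.eq_or_lt with rfl | hlt
  · rw [← hA, ← charPoly_natDegree, (charPoly_monic A).coeff_natDegree, charPoly_natDegree, hA,
      ← hA', ← charPoly_natDegree, (charPoly_monic A').coeff_natDegree]
  · rw [coeff_eq_zero_of_natDegree_lt (by rwa [charPoly_natDegree, hA]),
      coeff_eq_zero_of_natDegree_lt (by rwa [charPoly_natDegree, hA'])]

theorem vRec_eq_iff {A A' : Finset F} {n k : ℕ} (hA : A.card = n) (hA' : A'.card = n) :
    vRec n k A = vRec n k A' ↔ (charPoly A - charPoly A').degree < k := by
  simp only [degree_lt_iff_coeff_zero, coeff_sub, sub_eq_zero, funext_iff, vRec]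
  refine ⟨fun h m hkm => ?_, fun h j => h _ (Nat.le_add_right _ _)⟩
  by_cases hmn : m < n
  · simpa [Nat.add_sub_cancel' hkm] using h ⟨m - k, by omega⟩
  · exact coeff_charPoly_eq_of_card_le hA hA' (not_lt.mp hmn)

theorem vRec_eq_of_sdiff_eq [DecidableEq F] {A A' B B' : Finset F} {s t k : ℕ}
    (hA : A.card = t) (hA' : A'.card = t) (hB : B.card = s) (hB' : B'.card = s) (hst : s ≤ t)
    (hrec : vRec t k A = vRec t k A') (hAB : A \ B = A' \ B') (hBA : B \ A = B' \ A') :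
    vRec s k B = vRec s k B' := by
  rw [vRec_eq_iff hA hA'] at hrec
  rw [vRec_eq_iff hB hB']
  have hcard : (B \ A).card ≤ (A \ B).card := by
    have hsplitA := card_sdiff_add_card_inter A B
    have hsplitB := card_sdiff_add_card_inter B A
    rw [inter_comm] at hsplitB
    omega
  refine lt_of_le_of_lt (degree_sub_le_of_mul_eq_mul (charPoly_monic (A \ B)) ?_
    (charPoly_mul_charPoly_sdiff A B) ?_) hrec
  · rw [degree_eq_natDegree (charPoly_monic _).ne_zero,
      degree_eq_natDegree (charPoly_monic _).ne_zero, charPoly_natDegree, charPoly_natDegree]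
    exact_mod_cast hcard
  · rw [hAB, hBA, charPoly_mul_charPoly_sdiff]

end CharPoly

section Counting

variable {F : Type*} [Field F] [Fintype F]

theorem ncard_le_of_injOn_vRec_pair {S : Set (Finset F × Finset F)} {s t k : ℕ}
    (hinj : Set.InjOn (fun p => (vRec t k p.1, vRec s k p.2)) S) :
    S.ncard ≤ Fintype.card F ^ (t - k) * Fintype.card F ^ (s - k) :=
  calc S.ncard ≤ (Set.univ : Set ((Fin (t - k) → F) × (Fin (s - k) → F))).ncard :=
        Set.ncard_le_ncard_of_injOn _ (fun _ _ => Set.mem_univ _) hinj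
    _ = _ := by simp [Set.ncard_univ]

theorem ncard_le_of_injOn_vRec_pair_of_card_inter [DecidableEq F] {S : Set (Finset F × Finset F)}
    {s t k ω : ℕ} (hst : s ≤ t)
    (hS : ∀ p ∈ S, p.1.card = t ∧ p.2.card = s ∧ (p.1 ∩ p.2).card = ω)
    (hinj : Set.InjOn (fun p => (vRec t k p.1, vRec s k p.2)) S) :
    S.ncard ≤ Fintype.card F ^ (t - k) *
      ((Fintype.card F).choose (t - ω) * (Fintype.card F).choose (s - ω)) := by
  set T : Finset ((Fin (t - k) → F) × Finset F × Finset F) :=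
    univ ×ˢ (powersetCard (t - ω) univ ×ˢ powersetCard (s - ω) univ)
  have hmaps : ∀ p ∈ S, (vRec t k p.1, p.1 \ p.2, p.2 \ p.1) ∈ (T : Set _) := by
    rintro ⟨A, B⟩ hp
    dsimp only
    obtain ⟨hA, hB, hAB⟩ : A.card = t ∧ B.card = s ∧ (A ∩ B).card = ω := hS _ hp
    have hsplitA := card_sdiff_add_card_inter A B
    have hsplitB := card_sdiff_add_card_inter B A
    rw [inter_comm] at hsplitB
    simp only [T, coe_product, Set.mem_prod, mem_coe, mem_univ, mem_powersetCard_univ,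
      true_and]
    omega
  have hinj' : Set.InjOn (fun p => (vRec t k p.1, p.1 \ p.2, p.2 \ p.1)) S := by
    rintro ⟨A, B⟩ hp ⟨A', B'⟩ hp' heq
    obtain ⟨hA, hB, -⟩ : A.card = t ∧ B.card = s ∧ _ := hS _ hp
    obtain ⟨hA', hB', -⟩ : A'.card = t ∧ B'.card = s ∧ _ := hS _ hp'
    simp only [Prod.mk.injEq] at heq
    obtain ⟨hrec, hAB, hBA⟩ := heq
    exact hinj hp hp' (Prod.ext hrec (vRec_eq_of_sdiff_eq hA hA' hB hB' hst hrec hAB hBA))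
  calc S.ncard ≤ (T : Set _).ncard := Set.ncard_le_ncard_of_injOn _ hmaps hinj'
    _ = _ := by simp [T, Set.ncard_coe_finset, card_powersetCard]

end Counting

theorem stmt7_general {F : Type*} [Field F] [Fintype F] [DecidableEq F]
    (k s t ω : ℕ) (hks : k ≤ s) (hst : s ≤ t) (hω : ω ≤ s)
    (g : ((Fin (t - k) → F) × (Fin (s - k) → F)) → Finset F × Finset F) :
    Set.ncard { p : Finset F × Finset F |
        p.1.card = t ∧ p.2.card = s ∧ (p.1 ∩ p.2).card = ω ∧
        g (vRec t k p.1, vRec s k p.2) = p }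
      ≤ (Fintype.card F) ^ min (t + s - 2 * k) (2 * t + s - 2 * ω - k) := by
  have hinj : Set.InjOn (fun p : Finset F × Finset F => (vRec t k p.1, vRec s k p.2))
      { p | p.1.card = t ∧ p.2.card = s ∧ (p.1 ∩ p.2).card = ω ∧
        g (vRec t k p.1, vRec s k p.2) = p } :=
    Set.LeftInvOn.injOn (f₁' := g) fun p hp => hp.2.2.2
  rcases min_choice (t + s - 2 * k) (2 * t + s - 2 * ω - k) with hmin | hmin <;> rw [hmin]
  · calc _ ≤ Fintype.card F ^ (t - k) * Fintype.card F ^ (s - k) :=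
          ncard_le_of_injOn_vRec_pair hinj
      _ = _ := by rw [← pow_add]; congr 1; omega
  · calc _ ≤ _ := ncard_le_of_injOn_vRec_pair_of_card_inter hst
          (fun p hp => ⟨hp.1, hp.2.1, hp.2.2.1⟩) hinj
      _ ≤ Fintype.card F ^ (t - k) * (Fintype.card F ^ (t - ω) * Fintype.card F ^ (s - ω)) := by
          gcongr <;> exact Nat.choose_le_pow _ _
      _ = _ := by rw [← pow_add, ← pow_add]; congr 1; omega

/-- Corollary 3 of the paper (bound on full recovery attacks via record
multiplicity): for any recovery function `g`, the number of pairs `(A, B)` of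
feature sets with `|A| = t`, `|B| = s`, `|A ∩ B| = ω` that `g` recovers from
their two deterministic vault records is at most
`q^{min(t+s−2k, 2t+s−2ω−k)}`. -/
theorem stmt7 {F : Type*} [Field F] [Fintype F] [DecidableEq F]
    (k s t ω : ℕ) (hk : 1 ≤ k) (hks : k ≤ s) (hst : s ≤ t) (hω : ω ≤ s)
    (g : ((Fin (t - k) → F) × (Fin (s - k) → F)) → Finset F × Finset F) :
    Set.ncard { p : Finset F × Finset F |
        p.1.card = t ∧ p.2.card = s ∧ (p.1 ∩ p.2).card = ω ∧
        g (vRec t k p.1, vRec s k p.2) = p }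
      ≤ (Fintype.card F) ^ min (t + s - 2 * k) (2 * t + s - 2 * ω - k) :=
  stmt7_general k s t ω hks hst hω g
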